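/- Let ℋ be a complex Hilbert space, H ≥ 0 self-adjoint, P a bounded operator on ℋ, and f ∈ C^∞(H) := ⋂_{l≥1} dom(H^l). Then for every t > 0 one has Φ^H_t(P)f ∈ dom(H) and H Φ^H_t(P) f = − e^{-tH} P f + Φ^H_t(PH) f + P e^{-tH} f, where Φ^H_t(PH)f := ∫_0^t e^{-sH} P H e^{-(t−s)H} f ds. Consequently, Φ^H_t(P)f ∈ dom(H²) if and only if P e^{-tH} f ∈ dom(H). -/

import Mathlib

/-!
Statement 8: Let `H ≥ 0` be self-adjoint in a complex Hilbert space `ℋ`, `P` a bounded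
operator and `f ∈ C^∞(H) = ⋂_l dom(H^l)`. Then for every `t > 0` one has
`Φ^H_t(P) f ∈ dom(H)` and
`H Φ^H_t(P) f = - e^{-tH} P f + Φ^H_t(PH) f + P e^{-tH} f`,
where `Φ^H_t(P) f = ∫_0^t e^{-sH} P e^{-(t-s)H} f ds` and
`Φ^H_t(PH) f = ∫_0^t e^{-sH} P H e^{-(t-s)H} f ds`.  Consequently,
`Φ^H_t(P) f ∈ dom(H²)` if and only if `P e^{-tH} f ∈ dom(H)`.
-/

noncomputable section

open MeasureTheory Filter

/-- The spectral calculus data of a nonnegative self-adjoint operator `H` in a complex Hilbert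
space: the heat semigroup `expH t = e^{-tH}` (for `t ≥ 0`) and the fractional powers of the
resolvent `res a = (H+1)^{-a}` (for `a > 0`), together with their defining properties. -/
structure NonnegSelfAdjointCalculus (𝓗 : Type*) [NormedAddCommGroup 𝓗]
    [InnerProductSpace ℂ 𝓗] [CompleteSpace 𝓗] where
  /-- the (generally unbounded) operator `H` -/
  H : 𝓗 →ₗ.[ℂ] 𝓗
  /-- `H` is self-adjoint (in particular densely defined) -/
  selfAdjoint : IsSelfAdjoint H
  /-- `H ≥ 0` -/
  nonneg : ∀ x : H.domain, 0 ≤ (inner ℂ (H x) (x : 𝓗) : ℂ).re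
  /-- the heat semigroup `e^{-tH}` of `H`, defined by spectral calculus -/
  expH : ℝ → 𝓗 →L[ℂ] 𝓗
  expH_zero : expH 0 = 1
  expH_add : ∀ s t : ℝ, 0 ≤ s → 0 ≤ t → expH (s + t) = (expH s).comp (expH t)
  /-- `e^{-tH}` is a contraction -/
  expH_norm : ∀ t : ℝ, 0 ≤ t → ‖expH t‖ ≤ 1
  /-- smoothing property: `e^{-tH}` maps into `dom H` for `t > 0` -/
  expH_mem_domain : ∀ t : ℝ, 0 < t → ∀ x : 𝓗, expH t x ∈ H.domain
  /-- strong continuity -/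
  expH_continuous : ∀ x : 𝓗, ContinuousOn (fun t : ℝ => expH t x) (Set.Ici 0)
  /-- `-H` is the generator of `e^{-tH}` -/
  expH_deriv : ∀ x : H.domain,
    HasDerivWithinAt (fun t : ℝ => expH t (x : 𝓗)) (-(H x)) (Set.Ici 0) 0
  /-- the fractional powers `(H+1)^{-a}` of the resolvent of `H`, defined by spectral
  calculus -/
  res : ℝ → 𝓗 →L[ℂ] 𝓗
  res_add : ∀ a b : ℝ, 0 < a → 0 < b → res (a + b) = (res a).comp (res b)
  res_norm : ∀ a : ℝ, 0 < a → ‖res a‖ ≤ 1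
  res_one_mem_domain : ∀ x : 𝓗, res 1 x ∈ H.domain
  /-- `res 1` is the resolvent `(H+1)^{-1}` -/
  res_one_spec : ∀ x : 𝓗, H ⟨res 1 x, res_one_mem_domain x⟩ + res 1 x = x
  res_comm_expH : ∀ a t : ℝ, (res a).comp (expH t) = (expH t).comp (res a)

/-- membership of `x` in the domain of the `l`-th power of the (generally unbounded)
operator `H`; `C^∞(H) = ⋂_l dom(H^l)` is then described by `∀ l, IterMem H l x`. -/
def LinearPMap.IterMem {𝓗 : Type*} [NormedAddCommGroup 𝓗] [InnerProductSpace ℂ 𝓗]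
    (H : 𝓗 →ₗ.[ℂ] 𝓗) : ℕ → 𝓗 → Prop
  | 0, _ => True
  | l + 1, x => ∃ h : x ∈ H.domain, H.IterMem l (H ⟨x, h⟩)

variable {𝓗 : Type*} [NormedAddCommGroup 𝓗] [InnerProductSpace ℂ 𝓗] [CompleteSpace 𝓗]

/-!
For `f ∈ dom H`, differentiate `Ψ(s) = e^{-sH} (H+1)^{-1} P e^{-(t-s)H} f` on `[0, t]`. The factor
`(H+1)^{-1}` puts `Ψ(s)` into `dom H`, so the product rule applies, and
`H (H+1)^{-1} = 1 - (H+1)^{-1}` turns the fundamental theorem of calculus into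
`(H+1)^{-1} (X + Φ_t(P) f) = Φ_t(P) f`, where `X` is the claimed value of `H Φ_t(P) f`. This says
exactly that `Φ_t(P) f ∈ dom H` with `H Φ_t(P) f = X`. As `H` commutes with `e^{-sH}`,
`Φ_t(PH) f = Φ_t(P) (Hf)`, which lies in `dom H` by the same argument applied to `Hf`; together
with `e^{-tH} P f ∈ dom H` this gives `X ∈ dom H` iff `P e^{-tH} f ∈ dom H`.
-/

namespace NonnegSelfAdjointCalculus

open Topology

variable (D : NonnegSelfAdjointCalculus 𝓗)

lemma expH_apply_norm_le {t : ℝ} (ht : 0 ≤ t) (x : 𝓗) : ‖D.expH t x‖ ≤ ‖x‖ := by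
  simpa using (D.expH t).le_of_opNorm_le (D.expH_norm t ht) x

lemma res_apply_expH (a t : ℝ) (x : 𝓗) : D.res a (D.expH t x) = D.expH t (D.res a x) :=
  DFunLike.congr_fun (D.res_comm_expH a t) x

lemma H_res_one (x : 𝓗) : D.H ⟨D.res 1 x, D.res_one_mem_domain x⟩ = x - D.res 1 x :=
  eq_sub_of_add_eq (D.res_one_spec x)

lemma eq_zero_of_H_add_self_eq_zero {z : D.H.domain} (h : D.H z + z = 0) : (z : 𝓗) = 0 := by
  have hre : (inner ℂ (D.H z) (z : 𝓗)).re + ‖(z : 𝓗)‖ ^ 2 = 0 := by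
    have := congrArg (fun x => (inner ℂ x (z : 𝓗)).re) h
    simpa [inner_add_left, inner_self_eq_norm_sq_to_K, ← Complex.ofReal_pow] using this
  have := D.nonneg z
  exact norm_eq_zero.mp (by nlinarith [norm_nonneg (z : 𝓗)])

lemma res_one_H_add_self (y : D.H.domain) : D.res 1 (D.H y + y) = y := by
  set z : D.H.domain := ⟨D.res 1 (D.H y + y), D.res_one_mem_domain _⟩ - y
  have hz : D.H z + z = 0 := by
    simp only [z, LinearPMap.map_sub, D.H_res_one, Submodule.coe_sub]
    abel
  exact sub_eq_zero.mp (D.eq_zero_of_H_add_self_eq_zero hz)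

lemma exists_H_eq_of_res_one_add_eq {x y : 𝓗} (h : D.res 1 (y + x) = x) :
    ∃ hx : x ∈ D.H.domain, D.H ⟨x, hx⟩ = y := by
  have hx : x ∈ D.H.domain := h ▸ D.res_one_mem_domain (y + x)
  refine ⟨hx, ?_⟩
  calc D.H ⟨x, hx⟩ = D.H ⟨D.res 1 (y + x), D.res_one_mem_domain _⟩ := by
        congr 1; exact Subtype.ext h.symm
    _ = y := by rw [D.H_res_one, h, add_sub_cancel_right]

lemma exists_H_expH_eq (τ : ℝ) {y : 𝓗} (hy : y ∈ D.H.domain) :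
    ∃ h : D.expH τ y ∈ D.H.domain, D.H ⟨D.expH τ y, h⟩ = D.expH τ (D.H ⟨y, hy⟩) := by
  apply D.exists_H_eq_of_res_one_add_eq
  rw [← map_add, D.res_apply_expH, D.res_one_H_add_self ⟨y, hy⟩]

lemma tendsto_expH_apply {α : Type*} {l : Filter α} {τ : α → ℝ} {c : ℝ} (hc : 0 ≤ c)
    (hτ : Tendsto τ l (𝓝 c)) (hτ₀ : ∀ᶠ a in l, 0 ≤ τ a) {y : α → 𝓗} {y₀ : 𝓗}
    (hy : Tendsto y l (𝓝 y₀)) :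
    Tendsto (fun a => D.expH (τ a) (y a)) l (𝓝 (D.expH c y₀)) := by
  have hmoving : Tendsto (fun a => D.expH (τ a) (y a - y₀)) l (𝓝 0) := by
    refine squeeze_zero_norm' (hτ₀.mono fun a ha => D.expH_apply_norm_le ha _) ?_
    simpa using (hy.sub_const y₀).norm
  have hfixed : Tendsto (fun a => D.expH (τ a) y₀) l (𝓝 (D.expH c y₀)) :=
    (D.expH_continuous y₀ c hc).tendsto.comp (tendsto_nhdsWithin_iff.mpr ⟨hτ, hτ₀⟩)
  simpa only [← map_add, sub_add_cancel, zero_add] using hmoving.add hfixed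

lemma continuousOn_expH_apply_comp {S : Set ℝ} (hS : S ⊆ Set.Ici 0) {v : ℝ → 𝓗}
    (hv : ContinuousOn v S) : ContinuousOn (fun s => D.expH s (v s)) S := fun s hs =>
  D.tendsto_expH_apply (hS hs) (tendsto_id.mono_left nhdsWithin_le_nhds)
    (eventually_mem_nhdsWithin.mono fun _ h => hS h) (hv s hs)

lemma slope_expH_apply_add {a h : ℝ} (ha : 0 ≤ a) (hh : 0 ≤ h) (y : 𝓗) :
    slope (fun τ => D.expH τ y) a (a + h) = D.expH a (h⁻¹ • (D.expH h y - y)) := by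
  rw [slope_def_module, add_sub_cancel_left, D.expH_add a h ha hh,
    ContinuousLinearMap.map_smul_of_tower, map_sub, ContinuousLinearMap.comp_apply]

/-- Both one-sided difference quotients at `τ₀` at once, as `e^{-τH}` of one at `0`. -/
lemma slope_expH_apply {s τ₀ : ℝ} (hs : 0 ≤ s) (hτ₀ : 0 ≤ τ₀) (y : 𝓗) :
    slope (fun τ => D.expH τ y) τ₀ s
      = D.expH (min s τ₀) (|s - τ₀|⁻¹ • (D.expH |s - τ₀| y - y)) := by
  rcases le_total s τ₀ with h | h
  · rw [slope_comm, min_eq_left h, abs_sub_comm, abs_of_nonneg (sub_nonneg.2 h),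
      ← D.slope_expH_apply_add hs (sub_nonneg.2 h), add_sub_cancel]
  · rw [min_eq_right h, abs_of_nonneg (sub_nonneg.2 h),
      ← D.slope_expH_apply_add hτ₀ (sub_nonneg.2 h), add_sub_cancel]

lemma hasDerivWithinAt_expH_apply {y : 𝓗} (hy : y ∈ D.H.domain) {τ₀ : ℝ} (hτ₀ : 0 ≤ τ₀) :
    HasDerivWithinAt (fun τ => D.expH τ y) (-D.expH τ₀ (D.H ⟨y, hy⟩)) (Set.Ici 0) τ₀ := by
  have hgen : Tendsto (fun h : ℝ => h⁻¹ • (D.expH h y - y)) (𝓝[Set.Ici 0 \ {0}] 0)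
      (𝓝 (-D.H ⟨y, hy⟩)) := by
    refine (hasDerivWithinAt_iff_tendsto_slope.mp (D.expH_deriv ⟨y, hy⟩)).congr fun h => ?_
    simp [slope_def_module, D.expH_zero]
  have hdist : Tendsto (fun s => |s - τ₀|) (𝓝[Set.Ici 0 \ {τ₀}] τ₀) (𝓝[Set.Ici 0 \ {0}] 0) := by
    refine tendsto_nhdsWithin_iff.mpr ⟨?_, ?_⟩
    · exact ((continuous_id.sub continuous_const).abs.tendsto' τ₀ 0 (by simp)).mono_left
        nhdsWithin_le_nhds
    · filter_upwards [self_mem_nhdsWithin] with s hs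
      exact ⟨Set.mem_Ici.mpr (abs_nonneg _), by simpa [sub_eq_zero] using hs.2⟩
  have hmin : Tendsto (fun s => min s τ₀) (𝓝[Set.Ici 0 \ {τ₀}] τ₀) (𝓝 τ₀) :=
    ((continuous_id.min continuous_const).tendsto' τ₀ τ₀ (min_self τ₀)).mono_left
      nhdsWithin_le_nhds
  rw [hasDerivWithinAt_iff_tendsto_slope, ← map_neg]
  refine (D.tendsto_expH_apply hτ₀ hmin ?_ (hgen.comp hdist)).congr' ?_
  · filter_upwards [self_mem_nhdsWithin] with s hs using le_min hs.1 hτ₀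
  · filter_upwards [self_mem_nhdsWithin] with s hs using (D.slope_expH_apply hs.1 hτ₀ y).symm

lemma hasDerivWithinAt_expH_apply_comp {S : Set ℝ} (hS : S ⊆ Set.Ici 0) {v : ℝ → 𝓗} {v' : 𝓗}
    {s₀ : ℝ} (hs₀ : 0 ≤ s₀) (hv₀ : v s₀ ∈ D.H.domain) (hv : HasDerivWithinAt v v' S s₀) :
    HasDerivWithinAt (fun s => D.expH s (v s))
      (D.expH s₀ v' - D.expH s₀ (D.H ⟨v s₀, hv₀⟩)) S s₀ := by
  have hmoving : HasDerivWithinAt (fun s => D.expH s (v s - v s₀)) (D.expH s₀ v') S s₀ := by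
    rw [hasDerivWithinAt_iff_tendsto_slope] at hv ⊢
    refine (D.tendsto_expH_apply hs₀ (tendsto_id.mono_left nhdsWithin_le_nhds) ?_ hv).congr ?_
    · filter_upwards [self_mem_nhdsWithin] with s hs using hS hs.1
    · intro s
      simp only [slope_def_module, sub_self, map_zero, sub_zero,
        ContinuousLinearMap.map_smul_of_tower, id]
  have hfixed := (D.hasDerivWithinAt_expH_apply hv₀ hs₀).mono hS
  convert hmoving.add hfixed using 1
  · ext s
    rw [Pi.add_apply, ← map_add, sub_add_cancel]
  · rw [sub_eq_add_neg]

lemma hasDerivWithinAt_expH_res_one_apply_comp {S : Set ℝ} (hS : S ⊆ Set.Ici 0) {v : ℝ → 𝓗}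
    {v' : 𝓗} {s₀ : ℝ} (hs₀ : 0 ≤ s₀) (hv : HasDerivWithinAt v v' S s₀) :
    HasDerivWithinAt (fun s => D.expH s (D.res 1 (v s)))
      (D.res 1 (D.expH s₀ v') - D.expH s₀ (v s₀) + D.res 1 (D.expH s₀ (v s₀))) S s₀ := by
  have hrv : HasDerivWithinAt (fun s => D.res 1 (v s)) (D.res 1 v') S s₀ :=
    ((D.res 1).restrictScalars ℝ).hasFDerivAt.comp_hasDerivWithinAt s₀ hv
  convert D.hasDerivWithinAt_expH_apply_comp hS hs₀ (D.res_one_mem_domain _) hrv using 1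
  rw [D.H_res_one, map_sub, D.res_apply_expH, D.res_apply_expH]
  abel

lemma hasDerivWithinAt_expH_sub_apply {x : 𝓗} (hx : x ∈ D.H.domain) {t s₀ : ℝ} (hs₀ : s₀ ≤ t) :
    HasDerivWithinAt (fun s => D.expH (t - s) x) (D.expH (t - s₀) (D.H ⟨x, hx⟩))
      (Set.Iic t) s₀ := by
  have := (D.hasDerivWithinAt_expH_apply hx (sub_nonneg.2 hs₀)).scomp s₀
    ((hasDerivWithinAt_id s₀ (Set.Iic t)).const_sub t)
    fun s hs => Set.mem_Ici.mpr (sub_nonneg.2 hs)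
  simpa only [Function.comp_def, neg_smul, one_smul, neg_neg] using this

lemma continuousOn_phi_integrand (t : ℝ) (P : 𝓗 →L[ℂ] 𝓗) (x : 𝓗) :
    ContinuousOn (fun s => D.expH s (P (D.expH (t - s) x))) (Set.Icc 0 t) := by
  refine D.continuousOn_expH_apply_comp (fun s hs => hs.1) (P.continuous.comp_continuousOn ?_)
  exact (D.expH_continuous x).comp (continuous_const.sub continuous_id).continuousOn
    fun s hs => Set.mem_Ici.mpr (sub_nonneg.2 hs.2)

/-- The paper's `Φ^H_t(P) x`. -/
def phi (t : ℝ) (P : 𝓗 →L[ℂ] 𝓗) (x : 𝓗) : 𝓗 :=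
  ∫ s in (0 : ℝ)..t, D.expH s (P (D.expH (t - s) x))

lemma hasDerivAt_expH_res_one_phi_integrand (P : 𝓗 →L[ℂ] 𝓗) {f : 𝓗} (hf : f ∈ D.H.domain)
    {t s : ℝ} (hs : s ∈ Set.Ioo 0 t) :
    HasDerivAt (fun s => D.expH s (D.res 1 (P (D.expH (t - s) f))))
      (D.res 1 (D.expH s (P (D.expH (t - s) (D.H ⟨f, hf⟩)))) - D.expH s (P (D.expH (t - s) f))
        + D.res 1 (D.expH s (P (D.expH (t - s) f)))) s := by
  have hv : HasDerivWithinAt (fun s => P (D.expH (t - s) f))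
      (P (D.expH (t - s) (D.H ⟨f, hf⟩))) (Set.Icc 0 t) s :=
    ((P.restrictScalars ℝ).hasFDerivAt.comp_hasDerivWithinAt s
      (D.hasDerivWithinAt_expH_sub_apply hf hs.2.le)).mono Set.Icc_subset_Iic_self
  exact (D.hasDerivWithinAt_expH_res_one_apply_comp (fun s hs => hs.1) hs.1.le hv).hasDerivAt
    (Icc_mem_nhds hs.1 hs.2)

lemma res_one_add_phi (P : 𝓗 →L[ℂ] 𝓗) {f : 𝓗} (hf : f ∈ D.H.domain) {t : ℝ} (ht : 0 ≤ t) :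
    D.res 1 ((-D.expH t (P f) + D.phi t P (D.H ⟨f, hf⟩) + P (D.expH t f)) + D.phi t P f)
      = D.phi t P f := by
  set r := D.res 1
  set F : ℝ → 𝓗 := fun s => D.expH s (P (D.expH (t - s) f))
  set G : ℝ → 𝓗 := fun s => D.expH s (P (D.expH (t - s) (D.H ⟨f, hf⟩)))
  have hFc : ContinuousOn F (Set.Icc 0 t) := D.continuousOn_phi_integrand t P f
  have hGc : ContinuousOn G (Set.Icc 0 t) := D.continuousOn_phi_integrand t P _
  have hiF : IntervalIntegrable F volume 0 t := hFc.intervalIntegrable_of_Icc ht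
  have hiG : IntervalIntegrable G volume 0 t := hGc.intervalIntegrable_of_Icc ht
  have hirF : IntervalIntegrable (fun s => r (F s)) volume 0 t :=
    (r.continuous.comp_continuousOn hFc).intervalIntegrable_of_Icc ht
  have hirG : IntervalIntegrable (fun s => r (G s)) volume 0 t :=
    (r.continuous.comp_continuousOn hGc).intervalIntegrable_of_Icc ht
  have hΨc : ContinuousOn (fun s => D.expH s (r (P (D.expH (t - s) f)))) (Set.Icc 0 t) := by
    refine (r.continuous.comp_continuousOn hFc).congr fun s _ => ?_
    exact (D.res_apply_expH 1 s _).symm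
  have hFTC := intervalIntegral.integral_eq_sub_of_hasDerivAt_of_le ht hΨc
    (fun s hs => D.hasDerivAt_expH_res_one_phi_integrand P hf hs)
    ((hirG.sub hiF).add hirF)
  rw [intervalIntegral.integral_add (hirG.sub hiF) hirF, intervalIntegral.integral_sub hirG hiF,
    r.intervalIntegral_comp_comm hiG, r.intervalIntegral_comp_comm hiF] at hFTC
  simp only [sub_self, sub_zero, D.expH_zero, one_apply_eq_self] at hFTC
  rw [← D.res_apply_expH 1 t (P f)] at hFTC
  simp only [phi, map_add, map_neg]
  linear_combination (norm := module) hFTC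

lemma H_phi (P : 𝓗 →L[ℂ] 𝓗) {f : 𝓗} (hf : f ∈ D.H.domain) {t : ℝ} (ht : 0 ≤ t) :
    ∃ h : D.phi t P f ∈ D.H.domain,
      D.H ⟨D.phi t P f, h⟩ = -D.expH t (P f) + D.phi t P (D.H ⟨f, hf⟩) + P (D.expH t f) :=
  D.exists_H_eq_of_res_one_add_eq (D.res_one_add_phi P hf ht)

end NonnegSelfAdjointCalculus

lemma LinearPMap.iterMem_two_iff {E : Type*} [NormedAddCommGroup E] [InnerProductSpace ℂ E]
    {H : E →ₗ.[ℂ] E} {x : E} : H.IterMem 2 x ↔ ∃ h : x ∈ H.domain, H ⟨x, h⟩ ∈ H.domain := by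
  simp [LinearPMap.IterMem]

open Classical in
theorem statement8 (D : NonnegSelfAdjointCalculus 𝓗)
    -- `P` a bounded operator on `ℋ`
    (P : 𝓗 →L[ℂ] 𝓗)
    -- `f ∈ C^∞(H)`
    (f : 𝓗) (hf : ∀ l : ℕ, D.H.IterMem l f)
    (t : ℝ) (ht : 0 < t) :
    -- conclusion, with `Φ^H_t(P) f = ∫_0^t e^{-sH} P e^{-(t-s)H} f ds` and
    -- `Φ^H_t(PH) f = ∫_0^t e^{-sH} P H e^{-(t-s)H} f ds`:
    ∃ h1 : (∫ s in (0 : ℝ)..t, D.expH s (P (D.expH (t - s) f))) ∈ D.H.domain,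
      D.H ⟨∫ s in (0 : ℝ)..t, D.expH s (P (D.expH (t - s) f)), h1⟩ =
          -(D.expH t (P f)) +
            (∫ s in (0 : ℝ)..t,
              if h : D.expH (t - s) f ∈ D.H.domain then
                D.expH s (P (D.H ⟨D.expH (t - s) f, h⟩)) else 0) +
            P (D.expH t f) ∧
        (D.H.IterMem 2 (∫ s in (0 : ℝ)..t, D.expH s (P (D.expH (t - s) f))) ↔
          P (D.expH t f) ∈ D.H.domain) := by
  obtain ⟨hf₁, hf₂, -⟩ := hf 2
  obtain ⟨hΦ, hHΦ⟩ := D.H_phi P hf₁ ht.le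
  obtain ⟨hΦH, -⟩ := D.H_phi P hf₂ ht.le
  have hPH : (∫ s in (0 : ℝ)..t,
      if h : D.expH (t - s) f ∈ D.H.domain then
        D.expH s (P (D.H ⟨D.expH (t - s) f, h⟩)) else 0) = D.phi t P (D.H ⟨f, hf₁⟩) := by
    refine intervalIntegral.integral_congr fun s _ => ?_
    obtain ⟨hm, hcomm⟩ := D.exists_H_expH_eq (t - s) hf₁
    simp only [dif_pos hm, hcomm]
  have hHΦ_mem : D.H ⟨D.phi t P f, hΦ⟩ ∈ D.H.domain ↔ P (D.expH t f) ∈ D.H.domain := by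
    rw [hHΦ]
    exact Submodule.add_mem_iff_right _ (add_mem (neg_mem (D.expH_mem_domain t ht _)) hΦH)
  refine ⟨hΦ, hPH ▸ hHΦ, ?_⟩
  rw [LinearPMap.iterMem_two_iff]
  exact ⟨fun ⟨_, h⟩ => hHΦ_mem.mp h, fun h => ⟨hΦ, hHΦ_mem.mpr h⟩⟩
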